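/- The period doubling sequence 𝐮, the fixed point of the morphism φ: 0 ↦ 11, 1 ↦ 10 starting with 1, has critical exponent exactly 4. In particular, setting u^(n) = φ^n(1) and w^(0) = 111, w^(n+1) = φ(w^(n))·1, each w^(n) is a factor of 𝐮 with fractional root u^(n), |u^(n)| = 2^n, |w^(n)| = 2^{n+2} − 1, hence ind(u^(n)) ≥ (2^{n+2}−1)/2^n → 4. -/

import Mathlib

/-- `w` occurs in the sequence `u` at position `i`. -/
def OccursAt {α : Type*} (u : ℕ → α) (w : List α) (i : ℕ) : Prop :=
  ∀ k < w.length, w[k]? = some (u (i + k))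

/-- `w` is a factor of the sequence `u`. -/
def IsFactor {α : Type*} (u : ℕ → α) (w : List α) : Prop :=
  ∃ i, OccursAt u w i

/-- `z` has fractional root `r`: `z` is a prefix of the periodic sequence `r^ω`. -/
def HasRoot {α : Type*} (z r : List α) : Prop :=
  r ≠ [] ∧ ∀ k < z.length, z[k]? = r[k % r.length]?

/-- The index of `w` in `u`. -/
noncomputable def ind {α : Type*} (u : ℕ → α) (w : List α) : EReal :=
  sSup {e : EReal | ∃ z : List α, IsFactor u z ∧ HasRoot z w ∧
    e = (((z.length : ℝ) / (w.length : ℝ) : ℝ) : EReal)}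

/-- The critical exponent of `u`. -/
noncomputable def critExp {α : Type*} (u : ℕ → α) : EReal :=
  sSup {e : EReal | ∃ w : List α, w ≠ [] ∧ IsFactor u w ∧ e = ind u w}

/-- The period doubling substitution `φ(0) = 11`, `φ(1) = 10`. -/
def pdphi : Fin 2 → List (Fin 2) := fun a => if a = 0 then [1, 1] else [1, 0]

/-- The extension of `φ` to binary words. -/
def pdW (w : List (Fin 2)) : List (Fin 2) := w.flatMap pdphi

/-- The prefix of length `n` of a sequence. -/
def pref (u : ℕ → Fin 2) (n : ℕ) : List (Fin 2) := (List.range n).map u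

/-- `u⁽ⁿ⁾ = φⁿ(1)`. -/
def uuWord : ℕ → List (Fin 2) := fun n => pdW^[n] [1]

/-- `w⁽⁰⁾ = 111`, `w⁽ⁿ⁺¹⁾ = φ(w⁽ⁿ⁾)·1`. -/
def wwWord : ℕ → List (Fin 2)
  | 0 => [1, 1, 1]
  | n + 1 => pdW (wwWord n) ++ [1]

/-! The fixed point satisfies `u (2m) = 1` and `u (2m+1) = 1 - u m`. For the upper bound, every
window of length `3p` contains a `j` with `u j ≠ u (j + p)`: for odd `p` compare a position
`≡ 1 mod 4` (carrying `0`) with an even one (carrying `1`), for `p = 2q` double a mismatch for `q`.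
So a factor with period `p` has length at most `4p`. For the lower bound, `w⁽ⁿ⁾` has period `2ⁿ`
and length `2ⁿ⁺² − 1`, and these indices `4 − 2⁻ⁿ` tend to `4`. -/

lemma length_pdphi (a : Fin 2) : (pdphi a).length = 2 := by
  fin_cases a <;> rfl

lemma getElem?_pdphi_zero (a : Fin 2) : (pdphi a)[0]? = some 1 := by
  fin_cases a <;> rfl

lemma pdW_cons (a : Fin 2) (l : List (Fin 2)) : pdW (a :: l) = pdphi a ++ pdW l :=
  List.flatMap_cons

lemma pdW_append (l₁ l₂ : List (Fin 2)) : pdW (l₁ ++ l₂) = pdW l₁ ++ pdW l₂ :=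
  List.flatMap_append

lemma length_pdW (l : List (Fin 2)) : (pdW l).length = 2 * l.length := by
  induction l with
  | nil => rfl
  | cons a l ih => rw [pdW_cons, List.length_append, length_pdphi, ih, List.length_cons]; ring

lemma getElem?_pdW (l : List (Fin 2)) (k : ℕ) :
    (pdW l)[k]? = l[k / 2]?.bind fun a => (pdphi a)[k % 2]? := by
  induction l generalizing k with
  | nil => simp [pdW]
  | cons a l ih =>
    rw [pdW_cons]
    by_cases hk : k < 2
    · rw [List.getElem?_append_left (by rwa [length_pdphi]), show k / 2 = 0 by omega,
        Nat.mod_eq_of_lt hk]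
      rfl
    · rw [List.getElem?_append_right (by rw [length_pdphi]; omega), length_pdphi, ih,
        show k / 2 = (k - 2) / 2 + 1 by omega, show k % 2 = (k - 2) % 2 by omega]
      rfl

lemma getElem?_pdW_two_mul (l : List (Fin 2)) {k : ℕ} (hk : k < l.length) :
    (pdW l)[2 * k]? = some 1 := by
  rw [getElem?_pdW, Nat.mul_div_cancel_left k two_pos, List.getElem?_eq_getElem hk,
    Option.bind_some, Nat.mul_mod_right, getElem?_pdphi_zero]

section Words

variable {α : Type*} {u : ℕ → α} {z r : List α} {i : ℕ}

lemma HasRoot.getElem?_add_length (h : HasRoot z r) {k : ℕ} (hk : k + r.length < z.length) :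
    z[k + r.length]? = z[k]? := by
  rw [h.2 _ hk, h.2 _ (by omega), Nat.add_mod_right]

lemma OccursAt.apply_add_length_of_hasRoot (hz : OccursAt u z i) (h : HasRoot z r) {j : ℕ}
    (hij : i ≤ j) (hj : j + r.length < i + z.length) : u (j + r.length) = u j := by
  have e := h.getElem?_add_length (k := j - i) (by omega)
  rw [hz _ (by omega), hz _ (by omega), show i + (j - i + r.length) = j + r.length by omega,
    show i + (j - i) = j by omega] at e
  exact Option.some.inj e

lemma OccursAt.of_hasRoot (hz : OccursAt u z i) (h : HasRoot z r) (hrz : r.length ≤ z.length) :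
    OccursAt u r i := fun k hk => by
  rw [← Nat.mod_eq_of_lt hk, ← h.2 k (by omega), Nat.mod_eq_of_lt hk]
  exact hz k (by omega)

lemma le_ind_of_hasRoot (hz : IsFactor u z) (h : HasRoot z r) :
    (((z.length : ℝ) / r.length : ℝ) : EReal) ≤ ind u r :=
  le_sSup ⟨z, hz, h, rfl⟩

lemma ind_le_critExp {w : List α} (hw : w ≠ []) (hf : IsFactor u w) :
    ind u w ≤ critExp u :=
  le_sSup ⟨w, hw, hf, rfl⟩

end Words

lemma HasRoot.pdW_append_one {z r : List (Fin 2)} (h : HasRoot z r) :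
    HasRoot (pdW z ++ [1]) (pdW r) := by
  obtain ⟨hr, hroot⟩ := h
  have hr₀ : 0 < r.length := List.length_pos_iff.mpr hr
  refine ⟨List.ne_nil_of_length_pos (by rw [length_pdW]; omega), fun k hk => ?_⟩
  rw [List.length_append, length_pdW, List.length_singleton] at hk
  rw [length_pdW]
  rcases (show k < 2 * z.length ∨ k = 2 * z.length by omega) with hk | rfl
  · rw [List.getElem?_append_left (by rwa [length_pdW]), getElem?_pdW, getElem?_pdW,
      hroot _ (by omega), Nat.mod_mul_right_div_self, Nat.mod_mul_right_mod]
  · rw [List.getElem?_append_right (by rw [length_pdW]), length_pdW, Nat.sub_self,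
      Nat.mul_mod_mul_left, getElem?_pdW_two_mul _ (Nat.mod_lt _ hr₀)]
    rfl

lemma hasRoot_wwWord_uuWord (n : ℕ) : HasRoot (wwWord n) (uuWord n) := by
  induction n with
  | zero => unfold HasRoot; decide
  | succ n ih =>
    rw [uuWord, Function.iterate_succ_apply']
    exact ih.pdW_append_one

lemma length_uuWord (n : ℕ) : (uuWord n).length = 2 ^ n := by
  induction n with
  | zero => rfl
  | succ n ih => rw [uuWord, Function.iterate_succ_apply', length_pdW, ← uuWord, ih, pow_succ']

lemma length_wwWord (n : ℕ) : (wwWord n).length = 2 ^ (n + 2) - 1 := by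
  induction n with
  | zero => rfl
  | succ n ih =>
    rw [wwWord, List.length_append, length_pdW, ih, List.length_singleton,
      show 2 ^ (n + 1 + 2) = 2 * 2 ^ (n + 2) by ring]
    have := Nat.one_le_two_pow (n := n + 2)
    omega

lemma tendsto_two_pow_add_two_sub_one_div_two_pow :
    Filter.Tendsto (fun n : ℕ => ((2 : ℝ) ^ (n + 2) - 1) / 2 ^ n) Filter.atTop (nhds 4) := by
  have h := (tendsto_pow_atTop_nhds_zero_of_lt_one (by norm_num : (0 : ℝ) ≤ 1 / 2)
    (by norm_num)).const_sub (4 : ℝ)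
  rw [sub_zero] at h
  refine h.congr fun n => ?_
  rw [one_div_pow]
  field_simp
  ring

lemma pref_succ (u : ℕ → Fin 2) (n : ℕ) : pref u (n + 1) = pref u n ++ [u n] := by
  simp [pref, List.range_succ]

lemma pdphi_apply_eq_of_pref_fixed {u : ℕ → Fin 2} (hfix : ∀ n, pref u (2 * n) = pdW (pref u n))
    (m : ℕ) : pdphi (u m) = [u (2 * m), u (2 * m + 1)] := by
  have h := hfix (m + 1)
  rw [pref_succ, pdW_append, ← hfix m, show 2 * (m + 1) = 2 * m + 1 + 1 by ring, pref_succ,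
    pref_succ, List.append_assoc] at h
  simpa [pdW] using (List.append_cancel_left h).symm

section FixedPoint

variable {u : ℕ → Fin 2} (hu : ∀ m, pdphi (u m) = [u (2 * m), u (2 * m + 1)])
include hu

lemma apply_two_mul (m : ℕ) : u (2 * m) = 1 := by
  simpa [hu] using getElem?_pdphi_zero (u m)

lemma apply_two_mul_add_one (m : ℕ) : u (2 * m + 1) = 1 - u m := by
  have h : (pdphi (u m))[1]? = some (1 - u m) := by
    generalize u m = a
    fin_cases a <;> rfl
  simpa [hu] using h

lemma apply_eq_zero_of_mod_four_eq_one {m : ℕ} (hm : m % 4 = 1) : u m = 0 := by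
  rw [show m = 2 * (2 * (m / 4)) + 1 by omega, apply_two_mul_add_one hu, apply_two_mul hu]
  rfl

lemma exists_apply_ne_apply_add_of_odd {p : ℕ} (hp : Odd p) (i : ℕ) :
    ∃ j, i ≤ j ∧ j < i + 3 ∧ u j ≠ u (j + p) := by
  have hp2 := Nat.odd_iff.mp hp
  obtain ⟨j, hij, hji, hj⟩ : ∃ j, i ≤ j ∧ j < i + 3 ∧ (j % 4 = 1 ∨ (j + p) % 4 = 1) := by
    have hp4 : p % 4 = 1 ∨ p % 4 = 3 := by omega
    rcases (show i % 4 = 0 ∨ i % 4 = 1 ∨ i % 4 = 2 ∨ i % 4 = 3 by omega) with h | h | h | h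
    · exact ⟨i + 1, by omega⟩
    · exact ⟨i, by omega⟩
    · rcases hp4 with hp4 | hp4
      · exact ⟨i + 2, by omega⟩
      · exact ⟨i, by omega⟩
    · exact ⟨i + 2, by omega⟩
  refine ⟨j, hij, hji, ?_⟩
  -- one of `j`, `j + p` is `≡ 1 mod 4`, where `u` is `0`, and the other is even, where `u` is `1`
  rcases hj with hj | hj
  · rw [apply_eq_zero_of_mod_four_eq_one hu hj, show j + p = 2 * ((j + p) / 2) by omega,
      apply_two_mul hu]
    decide
  · rw [apply_eq_zero_of_mod_four_eq_one hu hj, show j = 2 * (j / 2) by omega,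
      apply_two_mul hu]
    decide

lemma exists_apply_ne_apply_add {p : ℕ} (hp : 0 < p) (i : ℕ) :
    ∃ j, i ≤ j ∧ j < i + 3 * p ∧ u j ≠ u (j + p) := by
  induction p using Nat.strong_induction_on generalizing i with
  | _ p ih =>
    rcases Nat.even_or_odd' p with ⟨q, rfl | rfl⟩
    · obtain ⟨m, him, hmi, hm⟩ := ih q (by omega) (by omega) (i / 2)
      refine ⟨2 * m + 1, by omega, by omega, ?_⟩
      rw [show 2 * m + 1 + 2 * q = 2 * (m + q) + 1 by ring, apply_two_mul_add_one hu,
        apply_two_mul_add_one hu]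
      exact fun h => hm (by simpa using h)
    · obtain ⟨j, hij, hji, hj⟩ := exists_apply_ne_apply_add_of_odd hu (odd_two_mul_add_one q) i
      exact ⟨j, hij, by omega, hj⟩

lemma OccursAt.pdW_append_one {w : List (Fin 2)} {i : ℕ} (h : OccursAt u w i) :
    OccursAt u (pdW w ++ [1]) (2 * i) := by
  intro k hk
  rw [List.length_append, length_pdW, List.length_singleton] at hk
  rcases (show k < 2 * w.length ∨ k = 2 * w.length by omega) with hk | rfl
  · rw [List.getElem?_append_left (by rwa [length_pdW]), getElem?_pdW, h (k / 2) (by omega),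
      Option.bind_some, hu]
    rcases Nat.mod_two_eq_zero_or_one k with hk2 | hk2 <;> rw [hk2] <;>
      simp only [List.getElem?_cons_zero, List.getElem?_cons_succ] <;>
      congr 2 <;> omega
  · rw [List.getElem?_append_right (by rw [length_pdW]), length_pdW, Nat.sub_self,
      ← mul_add, apply_two_mul hu]
    rfl

lemma isFactor_wwWord (n : ℕ) : IsFactor u (wwWord n) := by
  induction n with
  | zero =>
    refine ⟨2, fun k hk => ?_⟩
    have h₀ : u 0 = 1 := apply_two_mul hu 0
    have h₁ : u 1 = 0 := by rw [apply_two_mul_add_one hu 0, h₀]; rfl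
    have h₂ : u 2 = 1 := apply_two_mul hu 1
    have h₃ : u 3 = 1 := by rw [apply_two_mul_add_one hu 1, h₁]; rfl
    have h₄ : u 4 = 1 := apply_two_mul hu 2
    change k < 3 at hk
    interval_cases k <;> simp [wwWord, h₂, h₃, h₄]
  | succ n ih =>
    obtain ⟨i, hi⟩ := ih
    exact ⟨2 * i, hi.pdW_append_one hu⟩

lemma length_le_four_mul_of_hasRoot {z r : List (Fin 2)} {i : ℕ} (hz : OccursAt u z i)
    (h : HasRoot z r) : z.length ≤ 4 * r.length := by
  by_contra! hlen
  obtain ⟨j, hij, hji, hj⟩ := exists_apply_ne_apply_add hu (List.length_pos_iff.mpr h.1) i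
  exact hj (hz.apply_add_length_of_hasRoot h hij (by omega)).symm

lemma ind_le_four (w : List (Fin 2)) : ind u w ≤ 4 := by
  refine sSup_le ?_
  rintro _ ⟨z, ⟨i, hz⟩, h, rfl⟩
  have hr : (0 : ℝ) < w.length := by exact_mod_cast List.length_pos_iff.mpr h.1
  have hle : (z.length : ℝ) ≤ 4 * w.length := by
    exact_mod_cast length_le_four_mul_of_hasRoot hu hz h
  exact EReal.coe_le_coe_iff.mpr ((div_le_iff₀ hr).mpr hle)

lemma le_ind_uuWord (n : ℕ) :
    ((((2 ^ (n + 2) - 1 : ℝ) / (2 ^ n : ℝ) : ℝ)) : EReal) ≤ ind u (uuWord n) := by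
  convert le_ind_of_hasRoot (isFactor_wwWord hu n) (hasRoot_wwWord_uuWord n) using 4
  · rw [length_wwWord, Nat.cast_sub Nat.one_le_two_pow]
    push_cast
    rfl
  · rw [length_uuWord]
    push_cast
    rfl

lemma isFactor_uuWord (n : ℕ) : IsFactor u (uuWord n) := by
  obtain ⟨i, hi⟩ := isFactor_wwWord hu n
  refine ⟨i, hi.of_hasRoot (hasRoot_wwWord_uuWord n) ?_⟩
  rw [length_uuWord, length_wwWord, pow_add]
  have := Nat.one_le_two_pow (n := n)
  omega

lemma critExp_eq_four : critExp u = 4 := by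
  refine le_antisymm (sSup_le ?_) ?_
  · rintro _ ⟨w, -, -, rfl⟩
    exact ind_le_four hu w
  · have hlim := (continuous_coe_real_ereal.tendsto 4).comp
      tendsto_two_pow_add_two_sub_one_div_two_pow
    exact le_of_tendsto' hlim fun n => (le_ind_uuWord hu n).trans
      (ind_le_critExp (hasRoot_wwWord_uuWord n).1 (isFactor_uuWord hu n))

end FixedPoint

theorem periodDoubling_critExp_eq_four_general (u : ℕ → Fin 2)
    (hfix : ∀ n, pref u (2 * n) = pdW (pref u n)) :
    critExp u = (4 : EReal) ∧
    ∀ n : ℕ, IsFactor u (wwWord n) ∧ HasRoot (wwWord n) (uuWord n) ∧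
      (uuWord n).length = 2 ^ n ∧ (wwWord n).length = 2 ^ (n + 2) - 1 ∧
      ((((2 ^ (n + 2) - 1 : ℝ) / (2 ^ n : ℝ) : ℝ)) : EReal) ≤ ind u (uuWord n) := by
  have hu := pdphi_apply_eq_of_pref_fixed hfix
  exact ⟨critExp_eq_four hu, fun n => ⟨isFactor_wwWord hu n, hasRoot_wwWord_uuWord n,
    length_uuWord n, length_wwWord n, le_ind_uuWord hu n⟩⟩

/-- The period doubling sequence (the fixed point of `φ: 0 ↦ 11, 1 ↦ 10`
starting with `1`) has critical exponent exactly `4`; moreover each `w⁽ⁿ⁾` is a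
factor with fractional root `u⁽ⁿ⁾`, `|u⁽ⁿ⁾| = 2ⁿ`, `|w⁽ⁿ⁾| = 2ⁿ⁺² − 1`, whence
`ind(u⁽ⁿ⁾) ≥ (2ⁿ⁺² − 1)/2ⁿ`. -/
theorem periodDoubling_critExp_eq_four (u : ℕ → Fin 2)
    (h1 : u 0 = 1) (hfix : ∀ n, pref u (2 * n) = pdW (pref u n)) :
    critExp u = (4 : EReal) ∧
    ∀ n : ℕ, IsFactor u (wwWord n) ∧ HasRoot (wwWord n) (uuWord n) ∧
      (uuWord n).length = 2 ^ n ∧ (wwWord n).length = 2 ^ (n + 2) - 1 ∧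
      ((((2 ^ (n + 2) - 1 : ℝ) / (2 ^ n : ℝ) : ℝ)) : EReal) ≤ ind u (uuWord n) :=
  periodDoubling_critExp_eq_four_general u hfix
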